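/- Let $d \geq 1$, $g \geq 2d$, and $d \leq t \leq g/2$. Define $a_{m,n}$ by $\frac{1}{(1-x)^d(1-y)^d} + \frac{1}{(1-x)^d(1-y)^d(1-x-y)} = \sum_{m,n} a_{m,n} x^m y^n$. Then $g! - t!\,(g-t)!\, a_{t-d,\,g-t-d} = t!\,(g-t)!\left( \binom{t-1}{d-1}\binom{g-t-1}{d-2} + \sum_{k=2}^{d} \binom{t-k}{d-k}\binom{g-t-1+k}{d-1} \right)$. -/

import Mathlib

open Finset

/-- Binomial coefficient `a.choose b` allowing an integer lower entry, zero when `b < 0`. -/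
def binZ (a : ℕ) (b : ℤ) : ℚ := if 0 ≤ b then (Nat.choose a b.toNat : ℚ) else 0

/-- The series `1/((1-x)^d (1-y)^d) + 1/((1-x)^d (1-y)^d (1-x-y))` over `ℚ`. -/
noncomputable def seriesG (d : ℕ) : MvPowerSeries (Fin 2) ℚ :=
  (((1 - MvPowerSeries.X 0) ^ d * (1 - MvPowerSeries.X 1) ^ d : MvPowerSeries (Fin 2) ℚ))⁻¹ +
  ((1 - MvPowerSeries.X 0) ^ d * (1 - MvPowerSeries.X 1) ^ d *
    (1 - MvPowerSeries.X 0 - MvPowerSeries.X 1))⁻¹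



namespace Stmt4Aux

open MvPowerSeries

noncomputable abbrev X0 : MvPowerSeries (Fin 2) ℚ := MvPowerSeries.X 0
noncomputable abbrev X1 : MvPowerSeries (Fin 2) ℚ := MvPowerSeries.X 1

def cc (a : ℕ) : ℕ → ℚ := fun m => (Nat.choose (m + a) a : ℚ)
def dd : ℕ → ℚ := fun m => if m = 0 then 1 else 0

def F (f g : ℕ → ℚ) : MvPowerSeries (Fin 2) ℚ := fun e => f (e 0) * g (e 1)

def F2 (d : ℕ) : MvPowerSeries (Fin 2) ℚ := fun e => ((e 0 + e 1 + d).choose (e 0 + d) : ℚ)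

lemma coeff_F (f g : ℕ → ℚ) (e : Fin 2 →₀ ℕ) :
    MvPowerSeries.coeff e (F f g) = f (e 0) * g (e 1) := rfl

lemma coeff_F2 (d : ℕ) (e : Fin 2 →₀ ℕ) :
    MvPowerSeries.coeff e (F2 d) = ((e 0 + e 1 + d).choose (e 0 + d) : ℚ) := rfl

lemma chQ {a b a' b' : ℕ} (h1 : a = a') (h2 : b = b') :
    (Nat.choose a b : ℚ) = Nat.choose a' b' := by subst h1; subst h2; rfl

lemma pascalQ (n k : ℕ) : ((n+1).choose (k+1) : ℚ) = (n.choose k : ℚ) + (n.choose (k+1) : ℚ) := by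
  exact_mod_cast Nat.choose_succ_succ' n k

lemma coeff_shift (φ : MvPowerSeries (Fin 2) ℚ) (e : Fin 2 →₀ ℕ) (s : Fin 2) (k : ℕ) :
    MvPowerSeries.coeff e ((MvPowerSeries.X s)^k * φ) =
      if k ≤ e s then MvPowerSeries.coeff (e - Finsupp.single s k) φ else 0 := by
  rw [X_pow_eq, ← (commute_monomial (φ := φ)).mpr (fun _ => Commute.one_right _),
    coeff_mul_monomial]
  simp [Finsupp.single_le_iff]

lemma sub_single_apply_same (e : Fin 2 →₀ ℕ) (s : Fin 2) (k : ℕ) :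
    (e - Finsupp.single s k) s = e s - k := by
  simp [Finsupp.tsub_apply]

lemma sub_single_apply_ne (e : Fin 2 →₀ ℕ) (s t : Fin 2) (k : ℕ) (h : s ≠ t) :
    (e - Finsupp.single s k) t = e t := by
  simp [Finsupp.tsub_apply, Finsupp.single_apply, h]

lemma F_dd_dd : F dd dd = 1 := by
  ext e
  rw [coeff_F, coeff_one]
  simp only [dd]
  by_cases h0 : e 0 = 0 <;> by_cases h1 : e 1 = 0 <;>
    simp [h0, h1, Finsupp.ext_iff, Fin.forall_fin_two]

lemma stepA (a : ℕ) (g : ℕ → ℚ) : (1 - X0) * F (cc (a+1)) g = F (cc a) g := by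
  ext e
  rw [sub_mul, one_mul, map_sub,
    show X0 * F (cc (a+1)) g = X0^1 * F (cc (a+1)) g by rw [pow_one], coeff_shift,
    coeff_F, coeff_F]
  rcases Nat.eq_zero_or_pos (e 0) with h | h
  · rw [if_neg (by omega), h]
    simp [coeff_F, cc, h]
  · obtain ⟨m, hm⟩ : ∃ m, e 0 = m + 1 := ⟨e 0 - 1, by omega⟩
    rw [if_pos (by omega), coeff_F, sub_single_apply_same,
      sub_single_apply_ne _ _ _ _ (by decide), hm, ← sub_mul]
    congr 1
    simp only [cc, Nat.add_sub_cancel]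
    rw [show ((m + 1 + (a+1)).choose (a+1) : ℚ) = (((m + (a+1)) + 1).choose ((a+1-1)+1) : ℚ) from
        chQ (by omega) (by omega),
      pascalQ,
      show (((m + (a+1))).choose (a+1-1) : ℚ) = ((m + 1 + a).choose a : ℚ) from
        chQ (by omega) (by omega),
      show (((m + (a+1))).choose ((a+1-1)+1) : ℚ) = ((m + (a+1)).choose (a+1) : ℚ) from
        chQ (by omega) (by omega)]
    ring

lemma stepA0 (g : ℕ → ℚ) : (1 - X0) * F (cc 0) g = F dd g := by
  ext e
  rw [sub_mul, one_mul, map_sub,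
    show X0 * F (cc 0) g = X0^1 * F (cc 0) g by rw [pow_one], coeff_shift,
    coeff_F, coeff_F]
  rcases Nat.eq_zero_or_pos (e 0) with h | h
  · rw [if_neg (by omega), h]
    simp [coeff_F, cc, dd, h]
  · rw [if_pos (by omega), coeff_F, sub_single_apply_same,
      sub_single_apply_ne _ _ _ _ (by decide)]
    simp [cc, dd, Nat.pos_iff_ne_zero.mp h]

lemma powA (i : ℕ) : ∀ (k : ℕ) (g : ℕ → ℚ), (1 - X0)^i * F (cc (k+i)) g = F (cc k) g := by
  induction i with
  | zero => intro k g; simp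
  | succ n ih =>
    intro k g
    rw [pow_succ', mul_assoc, show k + (n+1) = (k+1) + n by omega, ih (k+1) g, stepA]

lemma powA0 (a : ℕ) (g : ℕ → ℚ) : (1 - X0)^(a+1) * F (cc a) g = F dd g := by
  rw [pow_succ', mul_assoc, show cc a = cc (0 + a) by rw [Nat.zero_add], powA, stepA0]

lemma stepB (b : ℕ) (f : ℕ → ℚ) : (1 - X1) * F f (cc (b+1)) = F f (cc b) := by
  ext e
  rw [sub_mul, one_mul, map_sub,
    show X1 * F f (cc (b+1)) = X1^1 * F f (cc (b+1)) by rw [pow_one], coeff_shift,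
    coeff_F, coeff_F]
  rcases Nat.eq_zero_or_pos (e 1) with h | h
  · rw [if_neg (by omega), h]
    simp [coeff_F, cc, h]
  · obtain ⟨m, hm⟩ : ∃ m, e 1 = m + 1 := ⟨e 1 - 1, by omega⟩
    rw [if_pos (by omega), coeff_F, sub_single_apply_same,
      sub_single_apply_ne _ _ _ _ (by decide), hm, ← mul_sub]
    congr 1
    simp only [cc, Nat.add_sub_cancel]
    rw [show ((m + 1 + (b+1)).choose (b+1) : ℚ) = (((m + (b+1)) + 1).choose ((b+1-1)+1) : ℚ) from
        chQ (by omega) (by omega),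
      pascalQ,
      show (((m + (b+1))).choose (b+1-1) : ℚ) = ((m + 1 + b).choose b : ℚ) from
        chQ (by omega) (by omega),
      show (((m + (b+1))).choose ((b+1-1)+1) : ℚ) = ((m + (b+1)).choose (b+1) : ℚ) from
        chQ (by omega) (by omega)]
    ring

lemma stepB0 (f : ℕ → ℚ) : (1 - X1) * F f (cc 0) = F f dd := by
  ext e
  rw [sub_mul, one_mul, map_sub,
    show X1 * F f (cc 0) = X1^1 * F f (cc 0) by rw [pow_one], coeff_shift,
    coeff_F, coeff_F]
  rcases Nat.eq_zero_or_pos (e 1) with h | h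
  · rw [if_neg (by omega), h]
    simp [coeff_F, cc, dd, h]
  · rw [if_pos (by omega), coeff_F, sub_single_apply_same,
      sub_single_apply_ne _ _ _ _ (by decide)]
    simp [cc, dd, Nat.pos_iff_ne_zero.mp h]

lemma powB (i : ℕ) : ∀ (k : ℕ) (f : ℕ → ℚ), (1 - X1)^i * F f (cc (k+i)) = F f (cc k) := by
  induction i with
  | zero => intro k f; simp
  | succ n ih =>
    intro k f
    rw [pow_succ', mul_assoc, show k + (n+1) = (k+1) + n by omega, ih (k+1) f, stepB]

lemma powB0 (b : ℕ) (f : ℕ → ℚ) : (1 - X1)^(b+1) * F f (cc b) = F f dd := by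
  rw [pow_succ', mul_assoc, show cc b = cc (0 + b) by rw [Nat.zero_add], powB, stepB0]

lemma sep_mul (f g : ℕ → ℚ) : F f dd * F dd g = F f g := by
  classical
  ext e
  rw [coeff_mul, coeff_F]
  rw [Finset.sum_eq_single (Finsupp.single 0 (e 0), Finsupp.single 1 (e 1))]
  · rw [coeff_F, coeff_F]
    simp [dd, Finsupp.single_apply]
  · rintro ⟨u, v⟩ huv hne
    rw [Finset.HasAntidiagonal.mem_antidiagonal] at huv
    rw [coeff_F, coeff_F]
    by_cases hu : u 1 = 0
    · by_cases hv : v 0 = 0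
      · exfalso
        apply hne
        have h0 : u 0 = e 0 := by
          have := congrArg (fun w => w 0) huv; simpa [hv] using this
        have h1 : v 1 = e 1 := by
          have := congrArg (fun w => w 1) huv; simpa [hu] using this
        have hu' : u = Finsupp.single 0 (e 0) := by
          ext s
          fin_cases s <;> simp [Finsupp.single_apply, h0, hu]
        have hv' : v = Finsupp.single 1 (e 1) := by
          ext s
          fin_cases s <;> simp [Finsupp.single_apply, h1, hv]
        rw [hu', hv']
      · simp [dd, hv]
    · simp [dd, hu]
  · intro h
    exfalso
    apply h
    rw [Finset.HasAntidiagonal.mem_antidiagonal]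
    ext s
    fin_cases s <;> simp [Finsupp.single_apply]

lemma stepW (d : ℕ) : (1 - X0 - X1) * F2 (d+1) = F dd (cc d) := by
  ext e
  rw [sub_mul, sub_mul, one_mul, map_sub, map_sub,
    show X0 * F2 (d+1) = X0^1 * F2 (d+1) by rw [pow_one], coeff_shift,
    show X1 * F2 (d+1) = X1^1 * F2 (d+1) by rw [pow_one], coeff_shift,
    coeff_F2, coeff_F]
  rcases Nat.eq_zero_or_pos (e 0) with h0 | h0 <;>
    rcases Nat.eq_zero_or_pos (e 1) with h1 | h1
  · rw [if_neg (by omega), if_neg (by omega), h0, h1]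
    simp [dd, cc]
  · obtain ⟨p, hp⟩ : ∃ p, e 1 = p + 1 := ⟨e 1 - 1, by omega⟩
    rw [if_neg (by omega), if_pos (by omega), coeff_F2,
      sub_single_apply_same, sub_single_apply_ne _ _ _ _ (by decide), h0, hp]
    simp only [dd, if_pos rfl, one_mul, Nat.zero_add, sub_zero, Nat.add_sub_cancel, cc]
    rw [show (((p+1) + (d+1)).choose (d+1) : ℚ) = (((p + (d+1)) + 1).choose (d+1) : ℚ) from
        chQ (by omega) rfl,
      show ((d+1) : ℕ) = d + 1 from rfl, pascalQ,
      show ((p + (d+1)).choose d : ℚ) = (((p+1) + d).choose d : ℚ) from chQ (by omega) rfl]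
    simp
  · obtain ⟨m, hm⟩ : ∃ m, e 0 = m + 1 := ⟨e 0 - 1, by omega⟩
    rw [if_pos (by omega), if_neg (by omega), coeff_F2,
      sub_single_apply_same, sub_single_apply_ne _ _ _ _ (by decide), h1, hm]
    simp only [dd, if_neg (by omega : ¬ (m+1) = 0), zero_mul, Nat.add_sub_cancel, Nat.add_zero,
      sub_zero]
    rw [show (((m+1) + (d+1)).choose ((m+1)+(d+1)) : ℚ) = (1 : ℚ) by
        rw [Nat.choose_self]; norm_num,
      show ((m + (d+1)).choose (m+(d+1)) : ℚ) = (1 : ℚ) by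
        rw [Nat.choose_self]; norm_num]
    ring
  · obtain ⟨m, hm⟩ : ∃ m, e 0 = m + 1 := ⟨e 0 - 1, by omega⟩
    obtain ⟨p, hp⟩ : ∃ p, e 1 = p + 1 := ⟨e 1 - 1, by omega⟩
    rw [if_pos (by omega), if_pos (by omega), coeff_F2, coeff_F2,
      sub_single_apply_same, sub_single_apply_ne _ _ _ _ (by decide),
      sub_single_apply_same, sub_single_apply_ne _ _ _ _ (by decide), hm, hp]
    simp only [dd, if_neg (by omega : ¬ (m+1) = 0), zero_mul, Nat.add_sub_cancel]
    rw [show (((m+1) + (p+1) + (d+1)).choose ((m+1)+(d+1)) : ℚ)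
          = (((m + (p+1) + (d+1)) + 1).choose ((m + (d+1)) + 1) : ℚ) from chQ (by omega) (by omega),
      pascalQ,
      show (((m + (p+1) + (d+1))).choose ((m + (d+1)) + 1) : ℚ)
          = (((m+1) + p + (d+1)).choose ((m+1)+(d+1)) : ℚ) from chQ (by omega) (by omega)]
    ring

end Stmt4Aux
namespace Stmt4Aux

lemma inv1 (c : ℕ) :
    (((1-X0)^(c+1) * (1-X1)^(c+1)) : MvPowerSeries (Fin 2) ℚ)⁻¹ = F (cc c) (cc c) := by
  rw [MvPowerSeries.inv_eq_iff_mul_eq_one (by simp)]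
  calc F (cc c) (cc c) * ((1-X0)^(c+1) * (1-X1)^(c+1))
      = (1-X1)^(c+1) * ((1-X0)^(c+1) * F (cc c) (cc c)) := by ring
    _ = (1-X1)^(c+1) * F dd (cc c) := by rw [powA0]
    _ = F dd dd := powB0 _ _
    _ = 1 := F_dd_dd

lemma inv2 (c : ℕ) :
    (((1-X0)^(c+1) * (1-X1)^(c+1) * (1 - X0 - X1)) : MvPowerSeries (Fin 2) ℚ)⁻¹
      = F (cc c) dd * F2 (c+1) := by
  rw [MvPowerSeries.inv_eq_iff_mul_eq_one (by simp)]
  calc (F (cc c) dd * F2 (c+1)) * ((1-X0)^(c+1) * (1-X1)^(c+1) * (1 - X0 - X1))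
      = ((1-X0)^(c+1) * F (cc c) dd) * ((1-X1)^(c+1) * ((1 - X0 - X1) * F2 (c+1))) := by ring
    _ = F dd dd * ((1-X1)^(c+1) * F dd (cc c)) := by rw [powA0, stepW]
    _ = F dd dd * F dd dd := by rw [powB0]
    _ = 1 := by rw [F_dd_dd, mul_one]

lemma key (c : ℕ) : X1^(c+1) * (F (cc c) dd * F2 (c+1))
    = F2 (c+1) - ∑ i ∈ Finset.range (c+1), X1^(c-i) * F (cc (c-i)) (cc c) := by
  have hg := geom_sum₂_mul (R := MvPowerSeries (Fin 2) ℚ) (1-X0) X1 (c+1)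
  have hY : (X1:MvPowerSeries (Fin 2) ℚ)^(c+1)
      = (1-X0)^(c+1) - (∑ i ∈ Finset.range (c+1), (1-X0)^i * X1^(c+1-1-i)) * (1 - X0 - X1) := by
    rw [show (1:MvPowerSeries (Fin 2) ℚ) - X0 - X1 = (1-X0) - X1 by ring, hg]; ring
  rw [hY, sub_mul]
  congr 1
  · calc (1-X0)^(c+1) * (F (cc c) dd * F2 (c+1))
        = ((1-X0)^(c+1) * F (cc c) dd) * F2 (c+1) := by ring
      _ = F dd dd * F2 (c+1) := by rw [powA0]
      _ = F2 (c+1) := by rw [F_dd_dd, one_mul]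
  · calc (∑ i ∈ Finset.range (c+1), (1-X0)^i * X1^(c+1-1-i)) * (1 - X0 - X1) * (F (cc c) dd * F2 (c+1))
        = (∑ i ∈ Finset.range (c+1), (1-X0)^i * X1^(c+1-1-i)) *
            (F (cc c) dd * ((1 - X0 - X1) * F2 (c+1))) := by ring
      _ = (∑ i ∈ Finset.range (c+1), (1-X0)^i * X1^(c+1-1-i)) * (F (cc c) dd * F dd (cc c)) := by
          rw [stepW]
      _ = (∑ i ∈ Finset.range (c+1), (1-X0)^i * X1^(c+1-1-i)) * F (cc c) (cc c) := by rw [sep_mul]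
      _ = ∑ i ∈ Finset.range (c+1), X1^(c-i) * F (cc (c-i)) (cc c) := by
          rw [Finset.sum_mul]
          refine Finset.sum_congr rfl fun i hi => ?_
          rw [Finset.mem_range] at hi
          have hp : (1-X0)^i * F (cc c) (cc c) = F (cc (c-i)) (cc c) := by
            have := powA i (c-i) (cc c)
            rwa [show (c-i)+i = c by omega] at this
          calc (1-X0)^i * X1^(c+1-1-i) * F (cc c) (cc c)
              = X1^(c-i) * ((1-X0)^i * F (cc c) (cc c)) := by
                rw [show c+1-1-i = c-i by omega]; ring
            _ = X1^(c-i) * F (cc (c-i)) (cc c) := by rw [hp]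

lemma Eapp0 (m n : ℕ) : (Finsupp.single (0:Fin 2) m + Finsupp.single (1:Fin 2) n) 0 = m := by
  simp [Finsupp.single_apply]

lemma Eapp1 (m n : ℕ) : (Finsupp.single (0:Fin 2) m + Finsupp.single (1:Fin 2) n) 1 = n := by
  simp [Finsupp.single_apply]

lemma Esub (m n k : ℕ) (h : k ≤ n) :
    (Finsupp.single (0:Fin 2) m + Finsupp.single (1:Fin 2) n) - Finsupp.single (1:Fin 2) k
      = Finsupp.single (0:Fin 2) m + Finsupp.single (1:Fin 2) (n - k) := by
  ext s
  fin_cases s <;> simp [Finsupp.tsub_apply, Finsupp.single_apply]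

lemma coeff_H (c m n : ℕ) :
    MvPowerSeries.coeff (Finsupp.single (0:Fin 2) m + Finsupp.single (1:Fin 2) n)
        (F (cc c) dd * F2 (c+1))
      = ((m + n + 2*(c+1)).choose (m + (c+1)) : ℚ)
        - ∑ i ∈ Finset.range (c+1), (cc (c-i) m) * (cc c (n + 1 + i)) := by
  have h1 : MvPowerSeries.coeff
      (Finsupp.single (0:Fin 2) m + Finsupp.single (1:Fin 2) (n + (c+1)))
      (X1^(c+1) * (F (cc c) dd * F2 (c+1)))
      = MvPowerSeries.coeff (Finsupp.single (0:Fin 2) m + Finsupp.single (1:Fin 2) n)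
        (F (cc c) dd * F2 (c+1)) := by
    rw [coeff_shift, if_pos (by rw [Eapp1]; omega), Esub _ _ _ (by omega),
      show n + (c+1) - (c+1) = n from by omega]
  rw [← h1, key, map_sub, map_sum, coeff_F2, Eapp0, Eapp1]
  congr 1
  · exact chQ (by omega) (by omega)
  · refine Finset.sum_congr rfl fun i hi => ?_
    rw [Finset.mem_range] at hi
    rw [coeff_shift, if_pos (by rw [Eapp1]; omega), Esub _ _ _ (by omega), coeff_F,
      Eapp0, Eapp1, show n + (c+1) - (c-i) = n + 1 + i from by omega]

end Stmt4Aux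
namespace Stmt4Aux

lemma binZ_neg (u : ℕ) : binZ u (((0:ℕ)+1 : ℤ) - 2) = 0 := by
  norm_num [binZ]

lemma binZ_pos (u c' : ℕ) : binZ u ((((c'+1)+1 : ℕ) : ℤ) - 2) = (u.choose c' : ℚ) := by
  have h : (0:ℤ) ≤ (((c'+1)+1 : ℕ) : ℤ) - 2 := by push_cast; omega
  rw [binZ, if_pos h]
  have h2 : (((((c'+1)+1 : ℕ) : ℤ)) - 2).toNat = c' := by push_cast; omega
  rw [h2]

lemma hS_lemma (c t u : ℕ) (ht : c + 1 ≤ t) (hu : c + 1 ≤ u) :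
    (∑ i ∈ Finset.range (c+1), cc (c-i) (t-(c+1)) * cc c (u-(c+1) + 1 + i))
        - cc c (t-(c+1)) * cc c (u-(c+1))
      = (Nat.choose (t-1) (c+1-1) : ℚ) * binZ (u-1) (((c+1 : ℕ) : ℤ) - 2)
        + ∑ k ∈ Finset.Icc 2 (c+1),
            (Nat.choose (t-k) (c+1-k) : ℚ) * (Nat.choose (u-1+k) (c+1-1) : ℚ) := by
  rw [Finset.sum_range_succ',
    show Finset.Icc 2 (c+1) = Finset.Ico 2 (c+2) from by rw [← Finset.Ico_add_one_right_eq_Icc]; rfl,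
    Finset.sum_Ico_eq_sum_range, show c+2-2 = c from by omega]
  have hsum : ∀ i ∈ Finset.range c,
      cc (c-(i+1)) (t-(c+1)) * cc c (u-(c+1) + 1 + (i+1))
        = (Nat.choose (t-(2+i)) (c+1-(2+i)) : ℚ) * (Nat.choose (u-1+(2+i)) (c+1-1) : ℚ) := by
    intro i hi
    rw [Finset.mem_range] at hi
    simp only [cc]
    rw [chQ (show t-(c+1) + (c-(i+1)) = t-(2+i) from by omega)
          (show c-(i+1) = c+1-(2+i) from by omega),
      chQ (show u-(c+1) + 1 + (i+1) + c = u-1+(2+i) from by omega)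
          (show c = c+1-1 from by omega)]
  rw [Finset.sum_congr rfl hsum]
  simp only [Nat.sub_zero, Nat.add_zero]
  have hrest : cc c (t-(c+1)) * cc c (u-(c+1) + 1) - cc c (t-(c+1)) * cc c (u-(c+1))
      = (Nat.choose (t-1) (c+1-1) : ℚ) * binZ (u-1) (((c+1 : ℕ) : ℤ) - 2) := by
    simp only [cc]
    rw [chQ (show t-(c+1) + c = t-1 from by omega) (show c = c+1-1 from by omega),
      chQ (show u-(c+1) + 1 + c = u from by omega) (rfl : c = c),
      chQ (show u-(c+1) + c = u-1 from by omega) (rfl : c = c)]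
    cases c with
    | zero => norm_num [binZ]
    | succ c' =>
      rw [binZ_pos]
      rw [show (u.choose (c'+1) : ℚ) = (((u-1)+1).choose (c'+1) : ℚ) from
          chQ (by omega) rfl, pascalQ,
        show (((u-1)).choose (c'+1) : ℚ) = ((u-1).choose ((c'+1)+1-1) : ℚ) from
          chQ rfl (by omega)]
      ring
  linear_combination hrest

end Stmt4Aux

/-- Closed form for `g! - t!(g-t)! a_{t-d,g-t-d}`. -/
theorem stmt4 (d g t : ℕ) (hd : 1 ≤ d) (hdt : d ≤ t) (htg : 2 * t ≤ g) (hg : 2 * d ≤ g) :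
    (Nat.factorial g : ℚ)
      - (Nat.factorial t : ℚ) * (Nat.factorial (g - t) : ℚ) *
        MvPowerSeries.coeff
          (Finsupp.single (0 : Fin 2) (t - d) + Finsupp.single (1 : Fin 2) (g - t - d))
          (seriesG d)
      = (Nat.factorial t : ℚ) * (Nat.factorial (g - t) : ℚ) *
        ((Nat.choose (t - 1) (d - 1) : ℚ) * binZ (g - t - 1) ((d : ℤ) - 2)
          + ∑ k ∈ Icc 2 d,
              (Nat.choose (t - k) (d - k) : ℚ) * (Nat.choose (g - t - 1 + k) (d - 1) : ℚ)) := by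
  obtain ⟨c, rfl⟩ : ∃ c, d = c + 1 := ⟨d - 1, by omega⟩
  have h1 : c + 1 ≤ t := hdt
  have h3 : c + 1 ≤ g - t := by omega
  rw [seriesG, map_add, Stmt4Aux.inv1, Stmt4Aux.inv2, Stmt4Aux.coeff_F,
    Stmt4Aux.Eapp0, Stmt4Aux.Eapp1, Stmt4Aux.coeff_H,
    show t - (c+1) + (g - t - (c+1)) + 2*(c+1) = g from by omega,
    show t - (c+1) + (c+1) = t from by omega]
  have hfact : (Nat.factorial g : ℚ)
      = (Nat.factorial t : ℚ) * (Nat.factorial (g-t) : ℚ) * (g.choose t : ℚ) := by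
    have := Nat.choose_mul_factorial_mul_factorial (show t ≤ g from by omega)
    push_cast [← this]
    ring
  rw [hfact]
  linear_combination (Nat.factorial t : ℚ) * (Nat.factorial (g-t) : ℚ) *
    Stmt4Aux.hS_lemma c t (g-t) h1 h3
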